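/- arXiv:2106.04350 — 4 statements merged into one kernel-verified Lean document; each statement's English description precedes it below -/
import Mathlib

section
/- Define Φ : ℝ² → ℝ² by Φ(x,y) = (|x| + y, 2x + |y|). Then Φ is a bijection from ℝ² to ℝ². -/
/-!
Setting `u = |x| + y` recovers `|y| = |u - |x||`, so `Φ` factors through the triangular
bijection `(x, y) ↦ (u, x)` followed by `(u, x) ↦ (u, 2x + |u - |x||)`. For fixed `u` the
second coordinate is continuous and grows at least as fast as `x`, because
`x ↦ |u - |x||` is 1-Lipschitz; hence it is a bijection of `ℝ`.
-/

open Function Filter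

theorem Function.Bijective.prod_shear {α β γ : Type*} {f : α → β → γ}
    (hf : ∀ a, Bijective (f a)) : Bijective fun p : α × β => (p.1, f p.1 p.2) :=
  (Equiv.prodShear (Equiv.refl α) fun a => Equiv.ofBijective _ (hf a)).bijective

theorem Continuous.bijective_of_sub_le_sub {f : ℝ → ℝ} (hf : Continuous f)
    (h : ∀ x y, x ≤ y → y - x ≤ f y - f x) : Bijective f := by
  have hmono : StrictMono f := fun x y hxy => by linarith [h x y hxy.le]
  refine ⟨hmono.injective, hf.surjective ?_ ?_⟩
  · refine tendsto_atTop_mono' atTop ?_ (tendsto_atTop_add_const_left atTop (f 0) tendsto_id)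
    filter_upwards [eventually_ge_atTop 0] with x hx
    rw [id]
    linarith [h 0 x hx]
  · refine tendsto_atBot_mono' atBot ?_ (tendsto_atBot_add_const_left atBot (f 0) tendsto_id)
    filter_upwards [eventually_le_atBot 0] with x hx
    rw [id]
    linarith [h x 0 hx]

theorem bijective_two_mul_add_abs_sub_abs (u : ℝ) :
    Bijective fun x : ℝ => 2 * x + |(u - |x|)| := by
  refine Continuous.bijective_of_sub_le_sub (by fun_prop) fun x y hxy => ?_
  have hlip : |(u - |x|) - (u - |y|)| ≤ y - x := calc
    |(u - |x|) - (u - |y|)| = |(|y| - |x|)| := by rw [sub_sub_sub_cancel_left]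
    _ ≤ |y - x| := abs_abs_sub_abs_le_abs_sub y x
    _ = y - x := abs_of_nonneg (sub_nonneg.2 hxy)
  linarith [abs_sub_abs_le_abs_sub (u - |x|) (u - |y|)]

/-- The map `Φ(x,y) = (|x| + y, 2x + |y|)` is a bijection of `ℝ²`. -/
theorem phi_bijective :
    Function.Bijective (fun p : ℝ × ℝ => (|p.1| + p.2, 2 * p.1 + |p.2|)) := by
  have hfactor : (fun p : ℝ × ℝ => (|p.1| + p.2, 2 * p.1 + |p.2|)) =
      (fun q : ℝ × ℝ => (q.1, 2 * q.2 + |(q.1 - |q.2|)|)) ∘ Prod.swap ∘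
        fun p : ℝ × ℝ => (p.1, |p.1| + p.2) := by
    funext p
    simp
  rw [hfactor]
  exact (Bijective.prod_shear bijective_two_mul_add_abs_sub_abs).comp <|
    Prod.swap_bijective.comp <| Bijective.prod_shear fun a => AddGroup.addLeft_bijective |a|
end

section
/- The affine span of the set {A, B, C, D} of 2×2 matrices, where A = [[1,1],[2,1]], B = [[−1,1],[2,−1]], C = (1/3)[[−1,1],[2,1]], D = (1/3)[[1,1],[2,−1]], has dimension 3, whereas the affine span of {[[1,1],[2,1]], [[1,1],[2,−1]], [[−1,1],[2,−1]], [[−1,1],[2,1]]} has dimension 2. -/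
/-!
`A, B, C, D` are affinely independent (a small linear system in the entries), so they span a
3-dimensional affine subspace. The four matrices `!![±1, 1; 2, ±1]` of the second set are the
vertices of a parallelogram: the fourth is the first minus the second plus the third, so it adds
nothing to the affine span of the other three, which are affinely independent.
-/

open Module

section AffineSpan

variable {k V P : Type*} [DivisionRing k] [AddCommGroup V] [Module k V] [AddTorsor V P]

theorem AffineIndependent.finrank_direction_affineSpan {ι : Type*} [Fintype ι] {n : ℕ}
    {p : ι → P} {s : Set P} (hp : AffineIndependent k p) (hs : Set.range p = s)
    (hcard : Fintype.card ι = n + 1) : finrank k (affineSpan k s).direction = n := by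
  rw [← hs, direction_affineSpan]
  exact hp.finrank_vectorSpan hcard

theorem affineSpan_insert_parallelogram_vertex (p₁ p₂ p₃ : P) :
    affineSpan k {p₁, p₂, p₃, (p₁ -ᵥ p₂) +ᵥ p₃} = affineSpan k {p₁, p₂, p₃} := by
  have hmem : (p₁ -ᵥ p₂) +ᵥ p₃ ∈ affineSpan k {p₁, p₂, p₃} :=
    vadd_mem_affineSpan_of_mem_affineSpan_of_mem_vectorSpan
      (mem_affineSpan k (by simp)) (vsub_mem_vectorSpan k (by simp) (by simp))
  rw [← affineSpan_insert_eq_affineSpan k hmem]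
  congr 1
  simp only [Set.insert_comm _ ((p₁ -ᵥ p₂) +ᵥ p₃), Set.pair_comm p₃]

end AffineSpan

theorem affineIndependent_iff_of_fintype_module {k V ι : Type*} [Ring k] [AddCommGroup V]
    [Module k V] [Fintype ι] {p : ι → V} :
    AffineIndependent k p ↔ ∀ w : ι → k, ∑ i, w i = 0 → ∑ i, w i • p i = 0 → ∀ i, w i = 0 := by
  rw [affineIndependent_iff_of_fintype]
  exact forall₂_congr fun w hw => by rw [Finset.univ.weightedVSub_eq_linear_combination hw]

theorem affineIndependent_clarkeJacobian_inverse_generators :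
    AffineIndependent ℝ (![!![(1:ℝ),1;2,1], !![(-1:ℝ),1;2,-1],
      (1/3 : ℝ) • !![(-1:ℝ),1;2,1], (1/3 : ℝ) • !![(1:ℝ),1;2,-1]] :
      Fin 4 → Matrix (Fin 2) (Fin 2) ℝ) := by
  rw [affineIndependent_iff_of_fintype_module]
  intro w hw hcomb
  rw [Fin.sum_univ_four] at hw hcomb
  have hentry (i j : Fin 2) := congr_fun (congr_fun hcomb i) j
  have h00 := hentry 0 0
  have h01 := hentry 0 1
  have h11 := hentry 1 1
  simp only [Matrix.add_apply, Matrix.smul_apply, Matrix.cons_val, Matrix.of_apply, smul_eq_mul,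
    Matrix.zero_apply] at h00 h01 h11
  intro i
  fin_cases i <;> simp only [Fin.zero_eta, Fin.mk_one, Fin.reduceFinMk, Fin.isValue] <;> linarith

theorem affineIndependent_clarkeJacobian_three_vertices :
    AffineIndependent ℝ (![!![(1:ℝ),1;2,1], !![(1:ℝ),1;2,-1], !![(-1:ℝ),1;2,-1]] :
      Fin 3 → Matrix (Fin 2) (Fin 2) ℝ) := by
  rw [affineIndependent_iff_of_fintype_module]
  intro w hw hcomb
  rw [Fin.sum_univ_three] at hw hcomb
  have hentry (i j : Fin 2) := congr_fun (congr_fun hcomb i) j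
  have h00 := hentry 0 0
  have h11 := hentry 1 1
  simp only [Matrix.add_apply, Matrix.smul_apply, Matrix.cons_val, Matrix.of_apply, smul_eq_mul,
    Matrix.zero_apply] at h00 h11
  intro i
  fin_cases i <;> simp only [Fin.zero_eta, Fin.mk_one, Fin.reduceFinMk, Fin.isValue] <;> linarith

/-- The affine span of `{A, B, C, D}` (the Clarke Jacobian of `Ψ = Φ⁻¹` at 0)
has dimension 3, while the affine span of the Clarke Jacobian of `Φ` at 0
has dimension 2. -/
theorem affineSpan_dims :
    Module.finrank ℝ (affineSpan ℝ ({!![(1:ℝ),1;2,1], !![(-1:ℝ),1;2,-1],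
        (1/3 : ℝ) • !![(-1:ℝ),1;2,1], (1/3 : ℝ) • !![(1:ℝ),1;2,-1]} :
        Set (Matrix (Fin 2) (Fin 2) ℝ))).direction = 3 ∧
    Module.finrank ℝ (affineSpan ℝ ({!![(1:ℝ),1;2,1], !![(1:ℝ),1;2,-1],
        !![(-1:ℝ),1;2,-1], !![(-1:ℝ),1;2,1]} :
        Set (Matrix (Fin 2) (Fin 2) ℝ))).direction = 2 := by
  have hvertex :
      !![(-1:ℝ),1;2,1] = (!![(1:ℝ),1;2,1] -ᵥ !![(1:ℝ),1;2,-1]) +ᵥ !![(-1:ℝ),1;2,-1] := by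
    ext i j
    fin_cases i <;> fin_cases j <;> norm_num [vsub_eq_sub, vadd_eq_add]
  constructor
  · exact affineIndependent_clarkeJacobian_inverse_generators.finrank_direction_affineSpan
      (by simp only [Matrix.range_cons, Matrix.range_empty, Set.union_empty, Set.singleton_union])
      (Fintype.card_fin _)
  · rw [hvertex, affineSpan_insert_parallelogram_vertex]
    exact affineIndependent_clarkeJacobian_three_vertices.finrank_direction_affineSpan
      (by simp only [Matrix.range_cons, Matrix.range_empty, Set.union_empty, Set.singleton_union])
      (Fintype.card_fin _)
end

section
/- Let M = {M⁻¹ : M ∈ conv{A, B, C, D}} where A = [[1,1],[2,1]], B = [[−1,1],[2,−1]], C = (1/3)[[−1,1],[2,1]], D = (1/3)[[1,1],[2,−1]] (all elements of the convex hull being invertible). Then M is not contained in conv{[[1,1],[2,1]], [[1,1],[2,−1]], [[−1,1],[2,−1]], [[−1,1],[2,1]]}. -/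
/-- The set of inverses of the Clarke Jacobian at 0 of `Ψ = Φ⁻¹` is not contained
in the Clarke Jacobian of `Φ` at 0. -/
theorem inverses_not_subset_clarke :
    ¬ ({N : Matrix (Fin 2) (Fin 2) ℝ |
        ∃ M ∈ convexHull ℝ ({!![(1:ℝ),1;2,1], !![(-1:ℝ),1;2,-1],
          (1/3 : ℝ) • !![(-1:ℝ),1;2,1], (1/3 : ℝ) • !![(1:ℝ),1;2,-1]} :
          Set (Matrix (Fin 2) (Fin 2) ℝ)), N = M⁻¹} ⊆
      convexHull ℝ ({!![(1:ℝ),1;2,1], !![(1:ℝ),1;2,-1], !![(-1:ℝ),1;2,-1],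
          !![(-1:ℝ),1;2,1]} : Set (Matrix (Fin 2) (Fin 2) ℝ))) := by
  intro h
  set S : Set (Matrix (Fin 2) (Fin 2) ℝ) :=
    ({!![(1:ℝ),1;2,1], !![(-1:ℝ),1;2,-1],
      (1/3 : ℝ) • !![(-1:ℝ),1;2,1], (1/3 : ℝ) • !![(1:ℝ),1;2,-1]} :
      Set (Matrix (Fin 2) (Fin 2) ℝ)) with hS
  have hM : (!![(0:ℝ),1;2,0]) ∈ convexHull ℝ S := by
    have hA : (!![(1:ℝ),1;2,1]) ∈ convexHull ℝ S :=
      subset_convexHull ℝ S (by simp [hS])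
    have hB : (!![(-1:ℝ),1;2,-1]) ∈ convexHull ℝ S :=
      subset_convexHull ℝ S (by simp [hS])
    have := (convex_convexHull ℝ S) hA hB (by norm_num : (0:ℝ) ≤ 1/2)
      (by norm_num : (0:ℝ) ≤ 1/2) (by norm_num)
    convert this using 1
    ext i j
    fin_cases i <;> fin_cases j <;> simp [Matrix.smul_apply] <;> norm_num
  have hinv : (!![(0:ℝ),1/2;1,0]) = (!![(0:ℝ),1;2,0])⁻¹ := by
    symm
    apply Matrix.inv_eq_right_inv
    ext i j
    fin_cases i <;> fin_cases j <;>
      simp [Matrix.mul_apply, Fin.sum_univ_two, Matrix.one_apply] <;> norm_num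
  have hmem := h ⟨!![(0:ℝ),1;2,0], hM, hinv⟩
  -- every element of the target hull has (0,1)-entry equal to 1
  have hone : ∀ X ∈ convexHull ℝ ({!![(1:ℝ),1;2,1], !![(1:ℝ),1;2,-1],
      !![(-1:ℝ),1;2,-1], !![(-1:ℝ),1;2,1]} : Set (Matrix (Fin 2) (Fin 2) ℝ)),
      X 0 1 = 1 := by
    intro X hX
    have hsub : ({!![(1:ℝ),1;2,1], !![(1:ℝ),1;2,-1],
        !![(-1:ℝ),1;2,-1], !![(-1:ℝ),1;2,1]} : Set (Matrix (Fin 2) (Fin 2) ℝ)) ⊆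
        {Y : Matrix (Fin 2) (Fin 2) ℝ | Y 0 1 = 1} := by
      intro Y hY
      rcases hY with h1 | h1 | h1 | h1 <;> subst h1 <;> simp
    have hconv : Convex ℝ {Y : Matrix (Fin 2) (Fin 2) ℝ | Y 0 1 = 1} := by
      intro x hx y hy a b ha hb hab
      simp only [Set.mem_setOf_eq, Matrix.add_apply, Matrix.smul_apply,
        smul_eq_mul] at *
      rw [hx, hy]; linarith
    exact convexHull_min hsub hconv hX
  have := hone _ hmem
  norm_num at this
end

section
/- Let X ∈ ℝ^{n×p}, let E ⊆ {1,…,p}, and suppose X_Eᵀ X_E is invertible, where X_E is the submatrix of columns of X indexed by E. Let q ∈ [0,1]^p satisfy q_i = 0 for i ∉ E. Then the matrix B = I_p − diag(q)(I_p − XᵀX) is invertible. -/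
open Matrix

/-- Invertibility of `B = I - diag(q)(I - XᵀX)` when `XᵀX` is invertible on the
coordinates `E` where `q` may be nonzero. -/
theorem lasso_jacobian_invertible {n p : ℕ} (X : Matrix (Fin n) (Fin p) ℝ)
    (E : Finset (Fin p))
    (hE : IsUnit ((X.submatrix id (Subtype.val : {i // i ∈ E} → Fin p))ᵀ *
      (X.submatrix id (Subtype.val : {i // i ∈ E} → Fin p))))
    (q : Fin p → ℝ) (hq : ∀ i, q i ∈ Set.Icc (0 : ℝ) 1)
    (hq0 : ∀ i, i ∉ E → q i = 0) :
    IsUnit ((1 : Matrix (Fin p) (Fin p) ℝ) -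
      Matrix.diagonal q * ((1 : Matrix (Fin p) (Fin p) ℝ) - Xᵀ * X)) := by
  set XE := X.submatrix id (Subtype.val : {i // i ∈ E} → Fin p) with hXE
  set B := (1 : Matrix (Fin p) (Fin p) ℝ) -
      Matrix.diagonal q * ((1 : Matrix (Fin p) (Fin p) ℝ) - Xᵀ * X) with hB
  rw [← Matrix.mulVec_injective_iff_isUnit]
  -- it suffices to show the kernel is trivial
  have key : ∀ v : Fin p → ℝ, B *ᵥ v = 0 → v = 0 := by
    intro v hv
    set u : Fin p → ℝ := v - (Xᵀ * X) *ᵥ v with hu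
    -- v = diag(q) * u
    have hvu : ∀ i, v i = q i * u i := by
      intro i
      have h2 : (((1 : Matrix (Fin p) (Fin p) ℝ) - Xᵀ * X) *ᵥ v) = u := by
        simp [hu, Matrix.sub_mulVec, Matrix.one_mulVec]
      have h1 : v i - (Matrix.diagonal q *ᵥ u) i = 0 := by
        have h3 := congrFun hv i
        rw [hB] at h3
        rw [← h2, Matrix.mulVec_mulVec]
        simpa [Matrix.sub_mulVec, Matrix.one_mulVec] using h3
      rw [Matrix.mulVec_diagonal] at h1
      linarith
    -- the sum identity
    have hsum : (∑ i, v i * (u i - v i)) + (X *ᵥ v) ⬝ᵥ (X *ᵥ v) = 0 := by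
      have hdot : ∑ i, v i * ((Xᵀ * X) *ᵥ v) i = (X *ᵥ v) ⬝ᵥ (X *ᵥ v) := by
        show v ⬝ᵥ ((Xᵀ * X) *ᵥ v) = _
        rw [← Matrix.mulVec_mulVec, Matrix.dotProduct_mulVec, Matrix.vecMul_transpose]
      rw [← hdot, ← Finset.sum_add_distrib]
      apply Finset.sum_eq_zero
      intro i _
      have : u i = v i - ((Xᵀ * X) *ᵥ v) i := by simp [hu]
      rw [this]; ring
    -- each summand is nonnegative
    have hterm : ∀ i, 0 ≤ v i * (u i - v i) := by
      intro i
      have := hvu i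
      have hq1 := (hq i).1
      have hq2 := (hq i).2
      have : v i * (u i - v i) = q i * (1 - q i) * (u i * u i) := by
        rw [hvu i]; ring
      rw [this]
      have h1q : 0 ≤ 1 - q i := by linarith
      exact mul_nonneg (mul_nonneg hq1 h1q) (mul_self_nonneg _)
    have hXv2 : 0 ≤ (X *ᵥ v) ⬝ᵥ (X *ᵥ v) := by
      simp [dotProduct]
      exact Finset.sum_nonneg fun i _ => mul_self_nonneg _
    have hsum_nonneg : 0 ≤ ∑ i, v i * (u i - v i) :=
      Finset.sum_nonneg fun i _ => hterm i
    -- conclude Xv = 0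
    have hXvdot : (X *ᵥ v) ⬝ᵥ (X *ᵥ v) = 0 := by linarith
    have hXv : X *ᵥ v = 0 := by
      funext k
      have : ∑ i, (X *ᵥ v) i * (X *ᵥ v) i = 0 := by
        simpa [dotProduct] using hXvdot
      have hk := (Finset.sum_eq_zero_iff_of_nonneg
        (fun i _ => mul_self_nonneg ((X *ᵥ v) i))).1 this k (Finset.mem_univ k)
      have := mul_self_eq_zero.1 hk
      simpa using this
    -- hence u = v and v i = q i * v i
    have huv : u = v := by
      simp [hu, ← Matrix.mulVec_mulVec, hXv]
    have hvq : ∀ i, v i = q i * v i := by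
      intro i
      have h := hvu i
      rw [huv] at h
      exact h
    have hvE : ∀ i, i ∉ E → v i = 0 := by
      intro i hi
      have := hvq i
      rw [hq0 i hi, zero_mul] at this
      exact this
    -- restrict to E
    set w : {i // i ∈ E} → ℝ := fun i => v i.val with hw
    have hXEw : XE *ᵥ w = X *ᵥ v := by
      funext k
      simp only [Matrix.mulVec, dotProduct, hXE, Matrix.submatrix_apply, id_eq, hw]
      rw [Finset.sum_coe_sort E (fun j => X k j * v j)]
      refine Finset.sum_subset (Finset.subset_univ E) ?_
      intro j _ hj
      rw [hvE j hj, mul_zero]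
    have hw0 : w = 0 := by
      have hinj := Matrix.mulVec_injective_iff_isUnit.2 hE
      apply hinj
      rw [← Matrix.mulVec_mulVec, hXEw, hXv]
      simp [Matrix.mulVec_zero]
    funext i
    by_cases hi : i ∈ E
    · exact congrFun hw0 ⟨i, hi⟩
    · exact hvE i hi
  intro x y hxy
  have : B *ᵥ (x - y) = 0 := by
    rw [Matrix.mulVec_sub, hxy, sub_self]
  have := key _ this
  exact sub_eq_zero.1 this
end
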